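/- There exists a constant c > 0 (depending only on λ = sup_k m_k) such that for every integer n ≥ 1, ∑_{l=1}^{M_n − 1} v(l) ≥ c · n · M_n. -/

import Mathlib

/-!
Let `S_N = ∑_{l < M_N} v(l)`. Putting a nonzero digit at position `n + 1` in front of
`r < M_{n+1}` raises `v` by `2 - 2 δ_n(r)`, hence by `2` whenever `r < M_n`. Cutting `[0, M_{n+2})`
into the `m_{n+1}` blocks `[d M_{n+1}, (d + 1) M_{n+1})` therefore gives
`S_{n+2} ≥ m_{n+1} S_{n+1} + 2 (m_{n+1} - 1) M_n`, and since `m_{n+1} m_n ≤ λ²` this propagates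
`n M_n ≤ λ² S_n` from `n` to `n + 1`.
-/

open Finset
open scoped ENNReal NNReal

noncomputable section

namespace Vilenkin

/-- The generalized powers `M_0 = 1`, `M_{k+1} = m_k M_k`. -/
def M (m : ℕ → ℕ) : ℕ → ℕ
  | 0 => 1
  | k + 1 => m k * M m k

/-- The `j`-th digit of `n` in the mixed-radix system determined by `m`. -/
def digit (m : ℕ → ℕ) (n j : ℕ) : ℕ := (n / M m j) % m j

/-- The Vilenkin group `G_m`, the complete direct product of the cyclic groups `Z_{m_k}`. -/
abbrev G (m : ℕ → ℕ) : Type := ∀ k : ℕ, ZMod (m k)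

instance (n : ℕ) : MeasurableSpace (ZMod n) := ⊤

/-- The generalized Rademacher functions `r_k(x) = exp(2 π i x_k / m_k)`. -/
def rad (m : ℕ → ℕ) (k : ℕ) (x : G m) : ℂ :=
  Complex.exp (2 * Real.pi * Complex.I * ((x k).val : ℂ) / (m k : ℂ))

/-- The Vilenkin system `ψ_n = ∏_k r_k^{n_k}` (the product is finite). -/
def psi (m : ℕ → ℕ) (n : ℕ) (x : G m) : ℂ :=
  ∏ j ∈ Finset.range (n + 1), rad m j x ^ digit m n j

/-- The Dirichlet kernels `D_n = ∑_{k=0}^{n-1} ψ_k`. -/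
def D (m : ℕ → ℕ) (n : ℕ) (x : G m) : ℂ :=
  ∑ k ∈ Finset.range n, psi m k x

/-- The Fejér kernels `K_n = (1/n) ∑_{k=0}^{n-1} D_k`. -/
def K (m : ℕ → ℕ) (n : ℕ) (x : G m) : ℂ :=
  (n : ℂ)⁻¹ * ∑ k ∈ Finset.range n, D m k x

/-- The cylinder `I_n(x) = {y : y_j = x_j for j < n}`. -/
def cyl (m : ℕ → ℕ) (n : ℕ) (x : G m) : Set (G m) := {y | ∀ j < n, y j = x j}

/-- The element `e_n` with `n`-th coordinate `1` and all other coordinates `0`. -/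
def e (m : ℕ → ℕ) (n : ℕ) : G m := fun k => if k = n then 1 else 0


/-- `δ_j(n) = 1` if the `j`-th digit of `n` is nonzero, `0` otherwise. -/
def delta (m : ℕ → ℕ) (n j : ℕ) : ℕ := if digit m n j ≠ 0 then 1 else 0

/-- The variation `v(n) = δ_0 + ∑_j |δ_{j+1} - δ_j|` (a finite sum). -/
def vvar (m : ℕ → ℕ) (n : ℕ) : ℕ :=
  delta m n 0 + ∑ j ∈ Finset.range n, ((delta m n (j + 1) : ℤ) - (delta m n j : ℤ)).natAbs

lemma sum_Icc_one_sub_one_eq_sum_range {β : Type*} [AddCommMonoid β] {f : ℕ → β} (hf : f 0 = 0)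
    (N : ℕ) : ∑ l ∈ Icc 1 (N - 1), f l = ∑ l ∈ range N, f l := by
  rcases N with _ | k
  · simp
  · rw [range_eq_Ico, sum_eq_sum_Ico_succ_bot k.succ_pos, hf, zero_add, Nat.add_sub_cancel,
      ← Ico_add_one_right_eq_Icc]
    rfl

lemma sum_range_mul {β : Type*} [AddCommMonoid β] (f : ℕ → β) (a b : ℕ) :
    ∑ l ∈ range (a * b), f l = ∑ d ∈ range a, ∑ r ∈ range b, f (d * b + r) := by
  induction a with
  | zero => simp
  | succ a ih => rw [add_mul, one_mul, sum_range_add, ih, sum_range_succ]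

section Variation

variable {m : ℕ → ℕ}

lemma M_pos (hm : ∀ k, 0 < m k) (k : ℕ) : 0 < M m k := by
  induction k with
  | zero => exact Nat.one_pos
  | succ k ih => exact Nat.mul_pos (hm k) ih

lemma M_dvd_M {j k : ℕ} (hjk : j ≤ k) : M m j ∣ M m k := by
  induction k, hjk using Nat.le_induction with
  | base => exact dvd_rfl
  | succ k _ ih => exact ih.mul_left (m k)

lemma M_le_M (hm : ∀ k, 0 < m k) {j k : ℕ} (hjk : j ≤ k) : M m j ≤ M m k :=
  Nat.le_of_dvd (M_pos hm k) (M_dvd_M hjk)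

lemma lt_M (hm : ∀ k, 2 ≤ m k) (k : ℕ) : k < M m k := by
  induction k with
  | zero => exact Nat.one_pos
  | succ k ih =>
    calc k + 1 < 2 * M m k := by omega
      _ ≤ m k * M m k := Nat.mul_le_mul_right _ (hm k)

lemma digit_eq_zero_of_lt {l j : ℕ} (hl : l < M m j) : digit m l j = 0 := by
  simp [digit, Nat.div_eq_of_lt hl]

lemma delta_eq_zero_of_lt {l j : ℕ} (hl : l < M m j) : delta m l j = 0 := by
  simp [delta, digit_eq_zero_of_lt hl]

lemma delta_le_one (l j : ℕ) : delta m l j ≤ 1 := by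
  unfold delta; split <;> omega

lemma vvar_zero : vvar m 0 = 0 := by
  simp [vvar, delta, digit]

lemma digit_add_of_dvd (hm : ∀ k, 0 < m k) {a j : ℕ} (ha : M m (j + 1) ∣ a) (r : ℕ) :
    digit m (a + r) j = digit m r j := by
  obtain ⟨t, rfl⟩ := ha
  have h : m j * M m j * t + r = r + t * m j * M m j := by ring
  rw [digit, digit, M, h, Nat.add_mul_div_right _ _ (M_pos hm j), Nat.add_mul_mod_self_right]

lemma digit_mul_add (hm : ∀ k, 0 < m k) {n d r : ℕ} (hd : d < m n) (hr : r < M m n) :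
    digit m (d * M m n + r) n = d := by
  rw [digit, add_comm, Nat.add_mul_div_right _ _ (M_pos hm n), Nat.div_eq_of_lt hr, zero_add,
    Nat.mod_eq_of_lt hd]

lemma vvar_eq_of_lt (hm : ∀ k, 2 ≤ m k) {l N : ℕ} (hl : l < M m N) :
    vvar m l = delta m l 0 +
      ∑ j ∈ range N, ((delta m l (j + 1) : ℤ) - (delta m l j : ℤ)).natAbs := by
  have hcut : ∀ a ≤ l + N, (∀ j, a ≤ j → delta m l j = 0) →
      ∑ j ∈ range a, ((delta m l (j + 1) : ℤ) - (delta m l j : ℤ)).natAbs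
        = ∑ j ∈ range (l + N), ((delta m l (j + 1) : ℤ) - (delta m l j : ℤ)).natAbs := by
    intro a ha hzero
    refine sum_subset (range_subset_range.2 ha) fun j _ hj => ?_
    have hj : a ≤ j := by simpa using hj
    simp [hzero j hj, hzero (j + 1) (by omega)]
  have hM : ∀ j, N ≤ j → l < M m j := fun j hj =>
    hl.trans_le (M_le_M (fun k => two_pos.trans_le (hm k)) hj)
  rw [vvar, hcut l (by omega) fun j hj => delta_eq_zero_of_lt ((lt_M hm j).trans_le' hj),
    hcut N (by omega) fun j hj => delta_eq_zero_of_lt (hM j hj)]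

/-- The new digit creates the jump `δ_{n+1} = 1 → δ_{n+2} = 0` and turns the jump `δ_n → 0` into
`δ_n → 1`. -/
lemma vvar_mul_M_add (hm : ∀ k, 2 ≤ m k) {n d r : ℕ} (hd0 : d ≠ 0) (hd : d < m (n + 1))
    (hr : r < M m (n + 1)) :
    vvar m (d * M m (n + 1) + r) + 2 * delta m r n = vvar m r + 2 := by
  have hm0 : ∀ k, 0 < m k := fun k => two_pos.trans_le (hm k)
  set l := d * M m (n + 1) + r with hl
  have hlM : l < M m (n + 2) :=
    calc l < (d + 1) * M m (n + 1) := by rw [add_mul, one_mul]; omega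
      _ ≤ m (n + 1) * M m (n + 1) := Nat.mul_le_mul_right _ hd
  have hrM : r < M m (n + 2) := hr.trans_le (M_le_M hm0 (by omega))
  have hlow : ∀ j ≤ n, delta m l j = delta m r j := fun j hj => by
    simp only [delta, hl, digit_add_of_dvd hm0 ((M_dvd_M (by omega : j + 1 ≤ n + 1)).mul_left d)]
  have hl1 : delta m l (n + 1) = 1 := by
    simp [delta, hl, digit_mul_add hm0 hd hr, hd0]
  have hsum : ∑ j ∈ range n, ((delta m l (j + 1) : ℤ) - (delta m l j : ℤ)).natAbs
      = ∑ j ∈ range n, ((delta m r (j + 1) : ℤ) - (delta m r j : ℤ)).natAbs :=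
    sum_congr rfl fun j hj => by
      rw [mem_range] at hj
      rw [hlow j hj.le, hlow (j + 1) hj]
  rw [vvar_eq_of_lt hm hlM, vvar_eq_of_lt hm hrM, sum_range_succ, sum_range_succ,
    sum_range_succ (n := n + 1), sum_range_succ (n := n), hsum, hlow 0 (Nat.zero_le n), hlow n le_rfl, hl1, delta_eq_zero_of_lt hlM,
    delta_eq_zero_of_lt hr, delta_eq_zero_of_lt hrM]
  rcases Nat.le_one_iff_eq_zero_or_eq_one.1 (delta_le_one (m := m) r n) with h | h <;>
    rw [h] <;> omega

def vvarSum (m : ℕ → ℕ) (N : ℕ) : ℕ := ∑ l ∈ range (M m N), vvar m l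

lemma one_le_vvarSum_one (hm : ∀ k, 2 ≤ m k) : 1 ≤ vvarSum m 1 := by
  have hdelta : delta m 1 0 = 1 := by
    simp [delta, digit, M, Nat.mod_eq_of_lt (hm 0)]
  calc 1 = delta m 1 0 := hdelta.symm
    _ ≤ vvar m 1 := Nat.le_add_right _ _
    _ ≤ vvarSum m 1 := single_le_sum (fun _ _ => Nat.zero_le _)
        (mem_range.2 (by simp only [M, mul_one]; exact hm 0))

lemma vvarSum_add_le_sum_block (hm : ∀ k, 2 ≤ m k) {n d : ℕ} (hd0 : d ≠ 0)
    (hd : d < m (n + 1)) :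
    vvarSum m (n + 1) + 2 * M m n ≤ ∑ r ∈ range (M m (n + 1)), vvar m (d * M m (n + 1) + r) := by
  have hm0 : ∀ k, 0 < m k := fun k => two_pos.trans_le (hm k)
  calc vvarSum m (n + 1) + 2 * M m n
      = vvarSum m (n + 1) + 2 * ∑ r ∈ range (M m n), (1 - delta m r n) := by
        rw [sum_congr rfl fun r hr => by rw [delta_eq_zero_of_lt (mem_range.1 hr)]]
        simp
    _ ≤ vvarSum m (n + 1) + 2 * ∑ r ∈ range (M m (n + 1)), (1 - delta m r n) := by
        gcongr
        exact M_le_M hm0 (Nat.le_succ n)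
    _ = ∑ r ∈ range (M m (n + 1)), vvar m (d * M m (n + 1) + r) := by
        rw [vvarSum, mul_sum, ← sum_add_distrib]
        refine sum_congr rfl fun r hr => ?_
        have := vvar_mul_M_add hm hd0 hd (mem_range.1 hr)
        have := delta_le_one (m := m) r n
        omega

lemma vvarSum_step (hm : ∀ k, 2 ≤ m k) (n : ℕ) :
    m (n + 1) * vvarSum m (n + 1) + 2 * (m (n + 1) - 1) * M m n ≤ vvarSum m (n + 2) := by
  obtain ⟨k, hk⟩ : ∃ k, m (n + 1) = k + 1 := ⟨m (n + 1) - 1, by have := hm (n + 1); omega⟩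
  have hblocks : k • (vvarSum m (n + 1) + 2 * M m n)
      ≤ ∑ d ∈ range k, ∑ r ∈ range (M m (n + 1)), vvar m ((d + 1) * M m (n + 1) + r) := by
    simpa using card_nsmul_le_sum (range k) _ _ fun d hd =>
      vvarSum_add_le_sum_block hm d.succ_ne_zero (by simp at hd; omega)
  rw [vvarSum, smul_eq_mul] at hblocks
  rw [vvarSum, vvarSum, show M m (n + 2) = m (n + 1) * M m (n + 1) from rfl, sum_range_mul, hk,
    sum_range_succ', Nat.add_sub_cancel]
  simp only [zero_mul, zero_add]
  linarith

lemma mul_M_le_sq_mul_vvarSum {lam : ℕ} (hm : ∀ k, 2 ≤ m k) (hlam : ∀ k, m k ≤ lam) {n : ℕ}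
    (hn : 1 ≤ n) : n * M m n ≤ lam ^ 2 * vvarSum m n := by
  induction n, hn using Nat.le_induction with
  | base =>
    calc 1 * M m 1 = m 0 := by simp [M]
      _ ≤ lam ^ 2 := (hlam 0).trans (Nat.le_self_pow two_ne_zero lam)
      _ ≤ lam ^ 2 * vvarSum m 1 := Nat.le_mul_of_pos_right _ (one_le_vvarSum_one hm)
  | succ n hn ih =>
    obtain ⟨t, rfl⟩ : ∃ t, n = t + 1 := ⟨n - 1, by omega⟩
    have hmm : m (t + 1) * m t ≤ lam ^ 2 := by
      rw [sq]; exact Nat.mul_le_mul (hlam (t + 1)) (hlam t)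
    have hM : M m t ≤ 2 * (m (t + 1) - 1) * M m t :=
      Nat.le_mul_of_pos_left _ (by have := hm (t + 1); omega)
    calc (t + 1 + 1) * M m (t + 2)
        = m (t + 1) * ((t + 1) * M m (t + 1)) + m (t + 1) * m t * M m t := by
          simp only [M]; ring
      _ ≤ m (t + 1) * (lam ^ 2 * vvarSum m (t + 1)) + lam ^ 2 * M m t := by
          gcongr
      _ ≤ lam ^ 2 * (m (t + 1) * vvarSum m (t + 1) + 2 * (m (t + 1) - 1) * M m t) := by
          rw [mul_add, mul_left_comm]
          gcongr
      _ ≤ lam ^ 2 * vvarSum m (t + 2) := Nat.mul_le_mul_left _ (vvarSum_step hm t)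

end Variation

/-- `∑_{l=1}^{M_n - 1} v(l) ≥ c n M_n`, with `c` depending only on `λ`. -/
theorem statement14 (lam : ℕ) :
    ∃ c : ℝ, 0 < c ∧ ∀ m : ℕ → ℕ, (∀ k, 2 ≤ m k) → (∀ k, m k ≤ lam) →
      ∀ n : ℕ, 1 ≤ n →
        c * n * M m n ≤ ∑ l ∈ Finset.Icc 1 (M m n - 1), (vvar m l : ℝ) := by
  -- `λ + 1` rather than `λ`: `c` is chosen before `m`, and must be positive even if `λ < 2`.
  refine ⟨1 / ((lam : ℝ) + 1) ^ 2, by positivity, fun m hm hlam n hn => ?_⟩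
  have hbound : n * M m n ≤ vvarSum m n * (lam + 1) ^ 2 := by
    rw [mul_comm (vvarSum m n)]
    exact (mul_M_le_sq_mul_vvarSum hm hlam hn).trans
      (Nat.mul_le_mul_right _ (Nat.pow_le_pow_left lam.le_succ 2))
  rw [sum_Icc_one_sub_one_eq_sum_range (by simp [vvar_zero]), ← Nat.cast_sum,
    div_mul_eq_mul_div, div_mul_eq_mul_div, div_le_iff₀ (by positivity), one_mul]
  exact_mod_cast hbound

end Vilenkin

end
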